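/- Let (G,X) be a strongly marked group with Property D. For all subsets Y, Y' ⊆ X, the intersection of standard parabolic subgroups satisfies G_Y ∩ G_{Y'} = G_{Y ∩ Y'}. -/

import Mathlib

namespace Paper

/-- The alternating list `(a, b, a, b, ...)` of length `m`. -/
def altList {α : Type*} (a b : α) : ℕ → List α
  | 0 => []
  | n + 1 => a :: altList b a n

/-- The alternating product `a b a ⋯` of length `m` in a monoid. -/
def altProd {G : Type*} [Monoid G] (a b : G) (m : ℕ) : G := (altList a b m).prod

variable {G : Type*} [Group G]

/-- The set of syllables of a generating set `X`: nontrivial powers of elements of `X`. -/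
def Syll (X : Set G) : Set G := {s | ∃ x ∈ X, ∃ a : ℤ, s = x ^ a ∧ s ≠ 1}

/-- A syllabic word: a list all of whose entries are syllables. -/
def SylWord (X : Set G) (w : List G) : Prop := ∀ s ∈ w, s ∈ Syll X

/-- The syllabic length of an element: minimal length of a syllabic word representing it. -/
noncomputable def sylLen (X : Set G) (g : G) : ℕ :=
  sInf {n | ∃ w : List G, SylWord X w ∧ w.prod = g ∧ w.length = n}

/-- A syllabic word is reduced if its length is the syllabic length of the element
it represents. -/
def Reduced (X : Set G) (w : List G) : Prop :=
  SylWord X w ∧ w.length = sylLen X w.prod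

/-- Elementary M-operation of type I. -/
def MOpI (X : Set G) (w w' : List G) : Prop :=
  ∃ (w₁ w₂ : List G) (s t : G), s ∈ Syll X ∧ t ∈ Syll X ∧
    w = w₁ ++ [s, t] ++ w₂ ∧
    ((s * t ∈ Syll X ∧ w' = w₁ ++ [s * t] ++ w₂) ∨ (s * t = 1 ∧ w' = w₁ ++ w₂))

/-- Elementary M-operation of type II. -/
def MOpII (X : Set G) (w w' : List G) : Prop :=
  ∃ (w₁ w₂ : List G) (s t : G) (m : ℕ), s ∈ Syll X ∧ t ∈ Syll X ∧ 2 ≤ m ∧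
    altProd s t m = altProd t s m ∧ sylLen X (altProd s t m) = m ∧
    w = w₁ ++ altList s t m ++ w₂ ∧ w' = w₁ ++ altList t s m ++ w₂

/-- Elementary M-operation (of type I or type II). -/
def MOp (X : Set G) (w w' : List G) : Prop := MOpI X w w' ∨ MOpII X w w'

/-- A syllabic word is M-reduced if its length cannot be shortened by any finite
sequence of elementary M-operations. -/
def MReduced (X : Set G) (w : List G) : Prop :=
  ∀ w', Relation.ReflTransGen (MOp X) w w' → ¬ w'.length < w.length

/-- Property D: a syllabic word is reduced iff it is M-reduced, and any two reduced
syllabic words representing the same element are connected by a finite sequence of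
elementary M-operations of type II. -/
def PropertyD (X : Set G) : Prop :=
  (∀ w : List G, SylWord X w → (Reduced X w ↔ MReduced X w)) ∧
  (∀ w w' : List G, Reduced X w → Reduced X w' → w.prod = w'.prod →
    Relation.ReflTransGen (MOpII X) w w')

/-- `(G, X)` is a marked group: `X` generates `G`. -/
def Marked (X : Set G) : Prop := Subgroup.closure X = ⊤

/-- `(G, X)` is a strongly marked group. -/
def StronglyMarked (X : Set G) : Prop :=
  Marked X ∧ (1 : G) ∉ X ∧
    ∀ x ∈ X, ∀ y ∈ X, ∀ a b : ℤ, x ^ a ≠ 1 → y ^ b ≠ 1 →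
      (x ^ a * y ^ b ∈ Syll X ∨ x ^ a * y ^ b = 1) → x = y

/-- The data of a Dyer graph: a simplicial graph with edge labels `m ≥ 2` and vertex
labels `f ∈ ℕ_{≥2} ∪ {∞}` such that any edge with `m(e) ≠ 2` has both endpoints
labelled `2`. -/
structure DyerData (V : Type*) where
  adj : V → V → Prop
  symm : ∀ u v, adj u v → adj v u
  loopless : ∀ v, ¬ adj v v
  m : V → V → ℕ
  m_symm : ∀ u v, m u v = m v u
  m_two_le : ∀ u v, adj u v → 2 ≤ m u v
  f : V → ℕ∞
  f_two_le : ∀ v, 2 ≤ f v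
  dyer : ∀ u v, adj u v → m u v ≠ 2 → f u = 2 ∧ f v = 2

/-- The defining relators of the Dyer group of `Δ`. -/
def DyerData.rels {V : Type*} (Δ : DyerData V) : Set (FreeGroup V) :=
  {r | ∃ v, Δ.f v ≠ ⊤ ∧ r = (FreeGroup.of v) ^ (Δ.f v).toNat} ∪
  {r | ∃ u v, Δ.adj u v ∧
    r = altProd (FreeGroup.of u) (FreeGroup.of v) (Δ.m u v) *
        (altProd (FreeGroup.of v) (FreeGroup.of u) (Δ.m u v))⁻¹}

/-- The Dyer group of the data `Δ`. -/
abbrev DyerGroup {V : Type*} (Δ : DyerData V) := PresentedGroup Δ.rels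

/-- The standard generating set of a Dyer group. -/
def DyerGens {V : Type*} (Δ : DyerData V) : Set (DyerGroup Δ) :=
  Set.range (PresentedGroup.of (rels := Δ.rels))


/-!
Take `g ∈ G_Y ∩ G_{Y'}`. A shortest syllabic word over `Y` representing `g` stays a word over
`Y` under every M-operation: a type II move only permutes the syllables it touches, and by
strong marking two syllables whose product is again a syllable (or trivial) are powers of the
same generator. Hence that word is M-reduced, so reduced by Property D; likewise for a word
over `Y'`. Property D links the two reduced words by type II moves, so the word over `Y'` is
also over `Y`, and strong marking forces each of its syllables to be a power of an element of
`Y ∩ Y'`.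
-/

section AltList

variable {α : Type*}

theorem mem_altList {a b c : α} : ∀ {m : ℕ}, c ∈ altList a b m → c = a ∨ c = b
  | 0, h => by simp [altList] at h
  | _ + 1, h => by
    rcases List.mem_cons.mp h with h | h
    · exact Or.inl h
    · exact (mem_altList h).symm

theorem mem_altList_iff {a b c : α} {m : ℕ} (hm : 2 ≤ m) :
    c ∈ altList a b m ↔ c = a ∨ c = b := by
  obtain ⟨n, rfl⟩ := Nat.exists_eq_add_of_le' hm
  refine ⟨mem_altList, ?_⟩
  rintro (rfl | rfl) <;> simp [altList]

theorem mem_altList_comm {a b c : α} {m : ℕ} (hm : 2 ≤ m) :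
    c ∈ altList a b m ↔ c ∈ altList b a m := by
  rw [mem_altList_iff hm, mem_altList_iff hm, or_comm]

end AltList

variable {X Y Y' : Set G} {s t g : G} {w w' : List G}

theorem syll_mono (h : Y ⊆ X) : Syll Y ⊆ Syll X := by
  rintro _ ⟨x, hx, a, rfl, hne⟩
  exact ⟨x, h hx, a, rfl, hne⟩

theorem ne_one_of_mem_syll (hs : s ∈ Syll X) : s ≠ 1 :=
  let ⟨_, _, _, _, hne⟩ := hs; hne

theorem inv_mem_syll (hs : s ∈ Syll Y) : s⁻¹ ∈ Syll Y := by
  obtain ⟨x, hx, a, rfl, hne⟩ := hs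
  exact ⟨x, hx, -a, (zpow_neg x a).symm, inv_ne_one.mpr hne⟩

theorem mem_syll_of_mem (hs : s ∈ Y) (hne : s ≠ 1) : s ∈ Syll Y :=
  ⟨s, hs, 1, (zpow_one s).symm, hne⟩

theorem mem_closure_of_mem_syll (hs : s ∈ Syll Y) : s ∈ Subgroup.closure Y := by
  obtain ⟨x, hx, a, rfl, -⟩ := hs
  exact zpow_mem (Subgroup.subset_closure hx) a

theorem sylWord_append : SylWord Y (w ++ w') ↔ SylWord Y w ∧ SylWord Y w' := by
  simp only [SylWord, List.mem_append, or_imp, forall_and]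

theorem SylWord.mono (h : Y ⊆ X) (hw : SylWord Y w) : SylWord X w :=
  fun s hs => syll_mono h (hw s hs)

theorem SylWord.prod_mem_closure (hw : SylWord Y w) : w.prod ∈ Subgroup.closure Y :=
  Subgroup.list_prod_mem _ fun s hs => mem_closure_of_mem_syll (hw s hs)

theorem exists_sylWord_prod_eq (hg : g ∈ Subgroup.closure Y) :
    ∃ w : List G, SylWord Y w ∧ w.prod = g := by
  induction hg using Subgroup.closure_induction with
  | mem x hx =>
    by_cases hx1 : x = 1
    · exact ⟨[], by simp [SylWord], hx1.symm⟩
    · exact ⟨[x], by simpa [SylWord] using mem_syll_of_mem hx hx1, List.prod_singleton⟩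
  | one => exact ⟨[], by simp [SylWord], rfl⟩
  | mul _ _ _ _ h₁ h₂ =>
    obtain ⟨w₁, hw₁, rfl⟩ := h₁
    obtain ⟨w₂, hw₂, rfl⟩ := h₂
    exact ⟨w₁ ++ w₂, sylWord_append.mpr ⟨hw₁, hw₂⟩, List.prod_append⟩
  | inv _ _ h =>
    obtain ⟨w, hw, rfl⟩ := h
    refine ⟨(w.map (·⁻¹)).reverse, fun s hs => ?_, (List.prod_inv_reverse w).symm⟩
    obtain ⟨u, hu, rfl⟩ := List.mem_map.mp (List.mem_reverse.mp hs)
    exact inv_mem_syll (hw u hu)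

theorem StronglyMarked.eq_of_zpow_eq (hSM : StronglyMarked X) {x y : G} (hx : x ∈ X)
    (hy : y ∈ X) {a b : ℤ} (hne : x ^ a ≠ 1) (h : x ^ a = y ^ b) : x = y := by
  have hb : y ^ (-b) = (x ^ a)⁻¹ := by rw [zpow_neg, h]
  exact hSM.2.2 x hx y hy a (-b) hne (by rwa [hb, inv_ne_one])
    (Or.inr (by rw [hb, mul_inv_cancel]))

theorem StronglyMarked.mul_mem_syll (hSM : StronglyMarked X) (hY : Y ⊆ X) (hs : s ∈ Syll Y)
    (ht : t ∈ Syll Y) (hst : s * t ∈ Syll X) : s * t ∈ Syll Y := by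
  obtain ⟨x, hx, a, rfl, hs1⟩ := hs
  obtain ⟨y, hy, b, rfl, ht1⟩ := ht
  obtain rfl : x = y := hSM.2.2 x (hY hx) y (hY hy) a b hs1 ht1 (Or.inl hst)
  exact ⟨x, hx, a + b, (zpow_add x a b).symm, ne_one_of_mem_syll hst⟩

theorem StronglyMarked.mem_syll_inter (hSM : StronglyMarked X) (hY : Y ⊆ X) (hY' : Y' ⊆ X)
    (hs : s ∈ Syll Y) (hs' : s ∈ Syll Y') : s ∈ Syll (Y ∩ Y') := by
  obtain ⟨x, hx, a, rfl, hne⟩ := hs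
  obtain ⟨y, hy, b, hxy, -⟩ := hs'
  obtain rfl : x = y := hSM.eq_of_zpow_eq (hY hx) (hY' hy) hne hxy
  exact ⟨x, ⟨hx, hy⟩, a, rfl, hne⟩

theorem MOp.prod_eq (h : MOp X w w') : w'.prod = w.prod := by
  rcases h with ⟨w₁, w₂, s, t, -, -, rfl, ⟨-, rfl⟩ | ⟨hst, rfl⟩⟩ |
    ⟨w₁, w₂, s, t, m, -, -, -, hcomm, -, rfl, rfl⟩
  · simp [mul_assoc]
  · simp [← mul_assoc s t, hst]
  · simp only [List.prod_append, altProd] at hcomm ⊢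
    rw [hcomm]

theorem MOpII.sylWord (h : MOpII X w w') (hw : SylWord Y w) : SylWord Y w' := by
  obtain ⟨w₁, w₂, s, t, m, -, -, hm, -, -, rfl, rfl⟩ := h
  intro u hu
  apply hw
  simp only [List.mem_append] at hu ⊢
  rwa [mem_altList_comm hm] at hu

theorem MOpI.sylWord (hSM : StronglyMarked X) (hY : Y ⊆ X) (h : MOpI X w w')
    (hw : SylWord Y w) : SylWord Y w' := by
  obtain ⟨w₁, w₂, s, t, -, -, rfl, ⟨hst, rfl⟩ | ⟨-, rfl⟩⟩ := h
  all_goals simp only [sylWord_append] at hw ⊢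
  · refine ⟨⟨hw.1.1, ?_⟩, hw.2⟩
    have hsY : s ∈ Syll Y := hw.1.2 s (by simp)
    have htY : t ∈ Syll Y := hw.1.2 t (by simp)
    simpa [SylWord] using hSM.mul_mem_syll hY hsY htY hst
  · exact ⟨hw.1.1, hw.2⟩

theorem MOp.sylWord (hSM : StronglyMarked X) (hY : Y ⊆ X) (h : MOp X w w')
    (hw : SylWord Y w) : SylWord Y w' :=
  h.elim (fun h => h.sylWord hSM hY hw) (fun h => h.sylWord hw)

theorem prod_eq_and_sylWord_of_reflTransGen_mOp (hSM : StronglyMarked X) (hY : Y ⊆ X)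
    (h : Relation.ReflTransGen (MOp X) w w') (hw : SylWord Y w) :
    w'.prod = w.prod ∧ SylWord Y w' := by
  induction h with
  | refl => exact ⟨rfl, hw⟩
  | tail _ hstep ih => exact ⟨hstep.prod_eq.trans ih.1, hstep.sylWord hSM hY ih.2⟩

theorem sylWord_of_reflTransGen_mOpII (h : Relation.ReflTransGen (MOpII X) w w')
    (hw : SylWord Y w) : SylWord Y w' := by
  induction h with
  | refl => exact hw
  | tail _ hstep ih => exact hstep.sylWord ih

theorem exists_reduced_sylWord_prod_eq (hSM : StronglyMarked X) (hPD : PropertyD X)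
    (hY : Y ⊆ X) (hg : g ∈ Subgroup.closure Y) :
    ∃ w : List G, SylWord Y w ∧ Reduced X w ∧ w.prod = g := by
  classical
  have hex : ∃ n, ∃ w : List G, SylWord Y w ∧ w.prod = g ∧ w.length = n := by
    obtain ⟨w, hw, hwg⟩ := exists_sylWord_prod_eq hg
    exact ⟨_, w, hw, hwg, rfl⟩
  obtain ⟨w, hw, hwg, hlen⟩ := Nat.find_spec hex
  refine ⟨w, hw, (hPD.1 w (hw.mono hY)).mpr fun w' hww' hlt => ?_, hwg⟩
  obtain ⟨hprod, hw'⟩ := prod_eq_and_sylWord_of_reflTransGen_mOp hSM hY hww' hw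
  exact Nat.find_min hex (hlen ▸ hlt) ⟨w', hw', hprod.trans hwg, rfl⟩

theorem statement_8 {G : Type*} [Group G] {X : Set G}
    (hSM : StronglyMarked X) (hPD : PropertyD X)
    (Y Y' : Set G) (hY : Y ⊆ X) (hY' : Y' ⊆ X) :
    Subgroup.closure Y ⊓ Subgroup.closure Y' = Subgroup.closure (Y ∩ Y') := by
  refine le_antisymm (fun g ⟨hgY, hgY'⟩ => ?_)
    (le_inf (Subgroup.closure_mono Set.inter_subset_left)
      (Subgroup.closure_mono Set.inter_subset_right))
  obtain ⟨w, hw, hwr, hwg⟩ := exists_reduced_sylWord_prod_eq hSM hPD hY hgY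
  obtain ⟨w', hw', hwr', hwg'⟩ := exists_reduced_sylWord_prod_eq hSM hPD hY' hgY'
  have hwY : SylWord Y w' :=
    sylWord_of_reflTransGen_mOpII (hPD.2 w w' hwr hwr' (hwg.trans hwg'.symm)) hw
  rw [← hwg']
  exact SylWord.prod_mem_closure fun s hs =>
    hSM.mem_syll_inter hY hY' (hwY s hs) (hw' s hs)

end Paper
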